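/- Let T > 0, I = (0,T) with one-dimensional Lebesgue measure, (Ω, μ) a finite measure space, and U := L²(I × Ω) with respect to the product measure. Let W be a real Hilbert space and ι : W → L²(Ω, μ) a compact bounded linear operator, and assume the truncation property: for every w ∈ W there exists w⁺ ∈ W with ι(w⁺) = max(ι w, 0) μ-a.e. and ⟨w, w⁺⟩_W ≤ ‖w‖²_W. Fix α, β, γ > 0, p ∈ (0,1). Assume f : U → ℝ is sequentially weakly lower semicontinuous, continuously Fréchet differentiable, and bounded below by a continuous affine functional. Let (ū, w̄) be a local solution of minimizing Φ(u,w) := f(u) + (α/2)‖u‖²_U + (β/2)‖w‖²_W + γ ∫_Ω |ι w|^p dμ over K := {(u,w) ∈ U × W : |u(t,x)| ≤ (ι w)(x) a.e.}, meaning (ū,w̄) ∈ K and there is ρ > 0 with Φ(ū,w̄) ≤ Φ(u,w) for all (u,w) ∈ K with ‖u−ū‖_U ≤ ρ and ‖w−w̄‖_W ≤ ρ. Then there exist λ̄ ∈ W* and μ̄¹, μ̄² ∈ U such that for all (v,z) ∈ U × W: f'(ū)v + α⟨ū, v⟩_U + β⟨w̄, z⟩_W + γ λ̄(z) + ⟨μ̄¹,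 E(ι z) − v⟩_U + ⟨μ̄², E(ι z) + v⟩_U = 0; moreover λ̄(w̄) = p ∫_Ω |ι w̄|^p dμ; and the complementarity conditions hold: μ̄¹ ≤ 0 a.e. on I × Ω, ⟨μ̄¹, E(ι w̄) − ū⟩_U = 0, μ̄² ≤ 0 a.e. on I × Ω, and ⟨μ̄², E(ι w̄) + ū⟩_U = 0. -/

import Mathlib

/-!
Let `g = ∇f(ū) + α ū`. Since `u ↦ Φ(u, w̄)` has a local minimum at `ū` on the convex set
`{u : |u| ≤ E(ι w̄)}`, `⟪g, u - ū⟫ ≥ 0` for all such `u`. Testing with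
`u = ū - 1_{g > 0} (E(ι w̄) + ū)` and with its mirror image shows that `g⁺` is complementary to
`E(ι w̄) + ū` and `g⁻` to `E(ι w̄) - ū`, so `μ̄¹ = -g⁻` and `μ̄² = -g⁺` are the multipliers.
The feasible set is a cone, so `t ↦ Φ(t ū, t w̄) = f(t ū) + t² (α‖ū‖² + β‖w̄‖²)/2 + t^p γ ∫|ι w̄|^p`
is minimal at `t = 1`, and its derivative there gives `⟪g, ū⟫ + β‖w̄‖² + γ p ∫|ι w̄|^p = 0`.
Defining `λ̄` by solving the stationarity equation for `γ λ̄(z)`, complementarity turns this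
identity into `λ̄(w̄) = p ∫|ι w̄|^p`.
-/

open MeasureTheory Filter

/-- The product measure on the time-space cylinder `I × Ω` with `I = (0,T)` carrying
one-dimensional Lebesgue measure. -/
noncomputable def timeSpaceMeasure {Ω : Type*} [MeasurableSpace Ω] (μ : Measure Ω)
    (T : ℝ) : Measure (ℝ × Ω) :=
  (volume.restrict (Set.Ioo (0 : ℝ) T)).prod μ

open InnerProductSpace

theorem IsLocalMinOn.inner_sub_nonneg_of_hasGradientAt {H : Type*} [NormedAddCommGroup H]
    [InnerProductSpace ℝ H] [CompleteSpace H] {F : H → ℝ} {g x y : H} {K : Set H}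
    (hmin : IsLocalMinOn F K x) (hF : HasGradientAt F g x) (hK : Convex ℝ K) (hx : x ∈ K)
    (hy : y ∈ K) : 0 ≤ inner ℝ g (y - x) := by
  simpa using hmin.hasFDerivWithinAt_nonneg (hasGradientAt_iff_hasFDerivAt.1 hF).hasFDerivWithinAt
    (sub_mem_posTangentConeAt_of_segment_subset (hK.segment_subset hx hy))

namespace MeasureTheory.Lp

variable {X : Type*} [MeasurableSpace X] {ν : Measure X}

theorem inner_eq_integral (f g : Lp ℝ 2 ν) : inner ℝ f g = ∫ x, f x * g x ∂ν := by
  simp [L2.inner_def, mul_comm]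

theorem posPart_sub_negPart {p : ENNReal} [Fact (1 ≤ p)] (g : Lp ℝ p ν) :
    posPart g - negPart g = g := by
  ext1
  filter_upwards [coeFn_sub (posPart g) (negPart g), coeFn_posPart g, coeFn_negPart_eq_max g]
    with x hsub hpos hneg
  rw [hsub, Pi.sub_apply, hpos, hneg]
  exact max_zero_sub_max_neg_zero_eq_self (g x)

theorem ae_posPart_nonneg {p : ENNReal} (g : Lp ℝ p ν) : ∀ᵐ x ∂ν, 0 ≤ posPart g x := by
  filter_upwards [coeFn_posPart g] with x hx
  exact hx ▸ le_max_right _ _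

theorem convex_setOf_ae_abs_le {p : ENNReal} [Fact (1 ≤ p)] (a : X → ℝ) :
    Convex ℝ {u : Lp ℝ p ν | ∀ᵐ x ∂ν, |u x| ≤ a x} := by
  intro u hu v hv s t hs ht hst
  change ∀ᵐ x ∂ν, _
  filter_upwards [coeFn_add (s • u) (t • v), coeFn_smul s u, coeFn_smul t v, hu, hv]
    with x hadd hsu htv hux hvx
  rw [hadd, Pi.add_apply, hsu, htv, Pi.smul_apply, Pi.smul_apply, smul_eq_mul, smul_eq_mul]
  calc |s * u x + t * v x| ≤ s * |u x| + t * |v x| := by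
        simpa [abs_mul, abs_of_nonneg hs, abs_of_nonneg ht] using abs_add_le (s * u x) (t * v x)
    _ ≤ s * a x + t * a x := by gcongr
    _ = a x := by rw [← add_mul, hst, one_mul]

theorem integral_abs_smul_rpow {c : ℝ} (hc : 0 ≤ c) (p : ℝ) {q : ENNReal} (y : Lp ℝ q ν) :
    ∫ x, |(c • y) x| ^ p ∂ν = c ^ p * ∫ x, |y x| ^ p ∂ν := by
  rw [← integral_const_mul]
  refine integral_congr_ae ?_
  filter_upwards [coeFn_smul c y] with x hx
  rw [hx, Pi.smul_apply, smul_eq_mul, abs_mul, abs_of_nonneg hc, Real.mul_rpow hc (abs_nonneg _)]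

theorem inner_posPart_add_eq_zero_of_forall_inner_sub_nonneg {g u a : Lp ℝ 2 ν}
    (hu : ∀ᵐ x ∂ν, |u x| ≤ a x)
    (hvi : ∀ v : Lp ℝ 2 ν, (∀ᵐ x ∂ν, |v x| ≤ a x) → 0 ≤ inner ℝ g (v - u)) :
    inner ℝ (posPart g) (a + u) = 0 := by
  have hS : MeasurableSet {x | 0 < g x} :=
    measurableSet_lt measurable_const (Lp.stronglyMeasurable g).measurable
  -- Move `u` to `-a` wherever `g > 0`.
  obtain ⟨h, hh⟩ : ∃ h : Lp ℝ 2 ν, ⇑h =ᵐ[ν] {x | 0 < g x}.indicator fun x => a x + u x := by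
    have hmem : MemLp ({x | 0 < g x}.indicator fun x => a x + u x) 2 ν :=
      ((Lp.memLp a).add (Lp.memLp u)).indicator hS
    exact ⟨hmem.toLp _, hmem.coeFn_toLp⟩
  have hfeas : ∀ᵐ x ∂ν, |(u - h) x| ≤ a x := by
    filter_upwards [coeFn_sub u h, hh, hu] with x hsub hhx hux
    rw [hsub, Pi.sub_apply, hhx, Set.indicator_apply]
    split_ifs
    · rw [sub_add_cancel_right, abs_neg, abs_of_nonneg ((abs_nonneg _).trans hux)]
    · simpa using hux
  have hgh : inner ℝ g h = inner ℝ (posPart g) (a + u) := by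
    rw [inner_eq_integral, inner_eq_integral]
    refine integral_congr_ae ?_
    filter_upwards [hh, coeFn_posPart g, coeFn_add a u] with x hhx hpos hau
    rw [hhx, hpos, hau, Pi.add_apply, Set.indicator_apply]
    split_ifs with hgx
    · rw [max_eq_left (le_of_lt hgx)]
    · rw [max_eq_right (not_lt.1 hgx), zero_mul, mul_zero]
  have hle : inner ℝ (posPart g) (a + u) ≤ 0 := by
    simpa [hgh, inner_neg_right] using hvi (u - h) hfeas
  have hge : 0 ≤ inner ℝ (posPart g) (a + u) := by
    rw [inner_eq_integral]
    refine integral_nonneg_of_ae ?_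
    filter_upwards [ae_posPart_nonneg g, coeFn_add a u, hu] with x hpos hau hux
    rw [hau, Pi.add_apply]
    exact mul_nonneg hpos (by linarith [neg_abs_le (u x)])
  exact le_antisymm hle hge

theorem inner_negPart_sub_eq_zero_of_forall_inner_sub_nonneg {g u a : Lp ℝ 2 ν}
    (hu : ∀ᵐ x ∂ν, |u x| ≤ a x)
    (hvi : ∀ v : Lp ℝ 2 ν, (∀ᵐ x ∂ν, |v x| ≤ a x) → 0 ≤ inner ℝ g (v - u)) :
    inner ℝ (negPart g) (a - u) = 0 := by
  have hneg : ∀ v : Lp ℝ 2 ν, (∀ᵐ x ∂ν, |v x| ≤ a x) → ∀ᵐ x ∂ν, |(-v) x| ≤ a x := by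
    intro v hv
    filter_upwards [coeFn_neg v, hv] with x hx hvx
    rwa [hx, Pi.neg_apply, abs_neg]
  rw [sub_eq_add_neg]
  refine inner_posPart_add_eq_zero_of_forall_inner_sub_nonneg (hneg u hu) fun v hv => ?_
  have := hvi (-v) (hneg v hv)
  rwa [show -v - u = -(v - -u) by abel, inner_neg_right, ← inner_neg_left] at this

theorem exists_multipliers_of_forall_inner_sub_nonneg {g u a : Lp ℝ 2 ν}
    (hu : ∀ᵐ x ∂ν, |u x| ≤ a x)
    (hvi : ∀ v : Lp ℝ 2 ν, (∀ᵐ x ∂ν, |v x| ≤ a x) → 0 ≤ inner ℝ g (v - u)) :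
    ∃ μ₁ μ₂ : Lp ℝ 2 ν, μ₁ - μ₂ = g ∧ (∀ᵐ x ∂ν, μ₁ x ≤ 0) ∧ inner ℝ μ₁ (a - u) = 0 ∧
      (∀ᵐ x ∂ν, μ₂ x ≤ 0) ∧ inner ℝ μ₂ (a + u) = 0 := by
  refine ⟨-negPart g, -posPart g, by rw [neg_sub_neg, posPart_sub_negPart], ?_, ?_, ?_, ?_⟩
  · filter_upwards [coeFn_neg (negPart g), ae_posPart_nonneg (-g)] with x hx hneg
    exact hx ▸ neg_nonpos.2 hneg
  · rw [inner_neg_left, inner_negPart_sub_eq_zero_of_forall_inner_sub_nonneg hu hvi, neg_zero]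
  · filter_upwards [coeFn_neg (posPart g), ae_posPart_nonneg g] with x hx hpos
    exact hx ▸ neg_nonpos.2 hpos
  · rw [inner_neg_left, inner_posPart_add_eq_zero_of_forall_inner_sub_nonneg hu hvi, neg_zero]

end MeasureTheory.Lp

section ConstantExtension

variable {X Y : Type*} [MeasurableSpace X] [MeasurableSpace Y] {ν : Measure X} {μ : Measure Y}

theorem MeasureTheory.Lp.ae_abs_smul_le_comp_snd {F : Lp ℝ 2 (ν.prod μ)} {y : Lp ℝ 2 μ} {t : ℝ}
    (h : ∀ᵐ q ∂ν.prod μ, |F q| ≤ y q.2) (ht : 0 ≤ t) :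
    ∀ᵐ q ∂ν.prod μ, |(t • F) q| ≤ (t • y) q.2 := by
  filter_upwards [coeFn_smul t F, Measure.quasiMeasurePreserving_snd.ae (coeFn_smul t y), h]
    with q hF hy hq
  rw [hF, hy, Pi.smul_apply, Pi.smul_apply, smul_eq_mul, smul_eq_mul, abs_mul, abs_of_nonneg ht]
  exact mul_le_mul_of_nonneg_left hq ht

variable [SFinite ν] [SFinite μ]

theorem MeasureTheory.Lp.norm_sq_of_ae_eq_comp_snd {F : Lp ℝ 2 (ν.prod μ)} {y : Lp ℝ 2 μ}
    (h : ⇑F =ᵐ[ν.prod μ] fun q => y q.2) : ‖F‖ ^ 2 = ν.real Set.univ * ‖y‖ ^ 2 := by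
  have hsq : (fun q => F q * F q) =ᵐ[ν.prod μ] fun q => y q.2 * y q.2 := h.mul h
  rw [← real_inner_self_eq_norm_sq, ← real_inner_self_eq_norm_sq, Lp.inner_eq_integral,
    Lp.inner_eq_integral, integral_congr_ae hsq, integral_fun_snd (fun x => y x * y x),
    smul_eq_mul]

noncomputable def constExtensionCLM (E : Lp ℝ 2 μ → Lp ℝ 2 (ν.prod μ))
    (hE : ∀ y, ⇑(E y) =ᵐ[ν.prod μ] fun q => y q.2) : Lp ℝ 2 μ →L[ℝ] Lp ℝ 2 (ν.prod μ) :=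
  LinearMap.mkContinuous
    { toFun := E
      map_add' := fun y₁ y₂ => by
        ext1
        filter_upwards [hE (y₁ + y₂), Lp.coeFn_add (E y₁) (E y₂), hE y₁, hE y₂,
          Measure.quasiMeasurePreserving_snd.ae_eq (Lp.coeFn_add y₁ y₂)] with q h h₁₂ h₁ h₂ hy
        rw [h, h₁₂, Pi.add_apply, h₁, h₂]
        exact hy
      map_smul' := fun c y => by
        ext1
        filter_upwards [hE (c • y), Lp.coeFn_smul c (E y), hE y,
          Measure.quasiMeasurePreserving_snd.ae_eq (Lp.coeFn_smul c y)] with q h hc h₁ hy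
        rw [RingHom.id_apply, h, hc, Pi.smul_apply, h₁]
        exact hy }
    √(ν.real Set.univ) fun y => by
      change ‖E y‖ ≤ _
      rw [← Real.sqrt_sq (norm_nonneg (E y)), Lp.norm_sq_of_ae_eq_comp_snd (hE y),
        Real.sqrt_mul measureReal_nonneg, Real.sqrt_sq (norm_nonneg y)]

end ConstantExtension

section SparseObjective

variable {U W Y : Type*} [MeasurableSpace Y] {μ : Measure Y} {q : ENNReal} [Fact (1 ≤ q)]
  [NormedAddCommGroup U] [NormedAddCommGroup W] [NormedSpace ℝ W]

noncomputable def sparseObjective (f : U → ℝ) (ι : W →L[ℝ] Lp ℝ q μ) (α β γ p : ℝ) (u : U)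
    (w : W) : ℝ :=
  f u + α / 2 * ‖u‖ ^ 2 + β / 2 * ‖w‖ ^ 2 + γ * ∫ x, |ι w x| ^ p ∂μ

variable (f : U → ℝ) (ι : W →L[ℝ] Lp ℝ q μ) (α β γ p : ℝ)

theorem sparseObjective_smul_smul [NormedSpace ℝ U] {t : ℝ} (ht : 0 ≤ t) (u : U) (w : W) :
    sparseObjective f ι α β γ p (t • u) (t • w) =
      f (t • u) + t ^ 2 * (α / 2 * ‖u‖ ^ 2 + β / 2 * ‖w‖ ^ 2) +
        t ^ p * (γ * ∫ x, |ι w x| ^ p ∂μ) := by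
  simp only [sparseObjective, map_smul, Lp.integral_abs_smul_rpow ht, norm_smul,
    Real.norm_of_nonneg ht]
  ring

theorem hasDerivAt_sparseObjective_smul_smul [NormedSpace ℝ U] {f' : U →L[ℝ] ℝ} {u : U}
    (hf : HasFDerivAt f f' u) (w : W) :
    HasDerivAt (fun t : ℝ => sparseObjective f ι α β γ p (t • u) (t • w))
      (f' u + α * ‖u‖ ^ 2 + β * ‖w‖ ^ 2 + γ * (p * ∫ x, |ι w x| ^ p ∂μ)) 1 := by
  have hray : HasDerivAt (fun t : ℝ => f (t • u)) (f' u) 1 := by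
    have hf1 : HasFDerivAt f f' ((1 : ℝ) • u) := by rwa [one_smul]
    have := hf1.comp_hasDerivAt (1 : ℝ) ((hasDerivAt_id' (x := (1 : ℝ))).smul_const u)
    rwa [one_smul] at this
  have hsq : HasDerivAt (fun t : ℝ => t ^ 2) 2 1 := by simpa using hasDerivAt_pow 2 (1 : ℝ)
  have hrpow : HasDerivAt (fun t : ℝ => t ^ p) p 1 := by
    simpa using Real.hasDerivAt_rpow_const (x := 1) (p := p) (Or.inl one_ne_zero)
  have := (hray.add (hsq.mul_const (α / 2 * ‖u‖ ^ 2 + β / 2 * ‖w‖ ^ 2))).add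
    (hrpow.mul_const (γ * ∫ x, |ι w x| ^ p ∂μ))
  refine (this.congr_of_eventuallyEq ?_).congr_deriv (by ring)
  filter_upwards [lt_mem_nhds one_pos] with t ht
  exact sparseObjective_smul_smul f ι α β γ p ht.le u w

theorem hasGradientAt_sparseObjective_left [InnerProductSpace ℝ U] [CompleteSpace U]
    {f' : U →L[ℝ] ℝ} {u : U} (hf : HasFDerivAt f f' u) (w : W) :
    HasGradientAt (fun v => sparseObjective f ι α β γ p v w) ((toDual ℝ U).symm f' + α • u) u := by
  rw [hasGradientAt_iff_hasFDerivAt]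
  refine HasFDerivAt.congr_fderiv (((hf.add ((hasStrictFDerivAt_norm_sq u).hasFDerivAt.const_mul
    (α / 2))).add_const (β / 2 * ‖w‖ ^ 2)).add_const (γ * ∫ x, |ι w x| ^ p ∂μ)) ?_
  ext v
  simp only [add_apply, smul_apply, coe_innerSL_apply, nsmul_eq_mul, Nat.cast_ofNat, smul_eq_mul,
    map_add, LinearIsometryEquiv.apply_symm_apply, map_smul, toDual_apply_apply, add_right_inj]
  ring

theorem inner_sub_nonneg_of_isLocalMinOn_sparseObjective [InnerProductSpace ℝ U]
    [CompleteSpace U] {K : Set (U × W)} {f' : U →L[ℝ] ℝ} {u₀ u : U} {w₀ : W}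
    (hmin : IsLocalMinOn (fun x : U × W => sparseObjective f ι α β γ p x.1 x.2) K (u₀, w₀))
    (hK : Convex ℝ {u | (u, w₀) ∈ K}) (hu₀ : (u₀, w₀) ∈ K) (hu : (u, w₀) ∈ K)
    (hf : HasFDerivAt f f' u₀) :
    0 ≤ inner ℝ ((toDual ℝ U).symm f' + α • u₀) (u - u₀) :=
  (hmin.comp_continuousOn (g := fun u => (u, w₀)) subset_rfl
    (continuous_id.prodMk continuous_const).continuousOn hu₀).inner_sub_nonneg_of_hasGradientAt
    (hasGradientAt_sparseObjective_left f ι α β γ p hf w₀) hK hu₀ hu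

theorem euler_identity_of_isLocalMinOn_sparseObjective [NormedSpace ℝ U] {K : Set (U × W)}
    {f' : U →L[ℝ] ℝ} {u₀ : U} {w₀ : W}
    (hmin : IsLocalMinOn (fun x : U × W => sparseObjective f ι α β γ p x.1 x.2) K (u₀, w₀))
    (hK : ∀ t : ℝ, 0 < t → t • (u₀, w₀) ∈ K) (hf : HasFDerivAt f f' u₀) :
    f' u₀ + α * ‖u₀‖ ^ 2 + β * ‖w₀‖ ^ 2 + γ * (p * ∫ x, |ι w₀ x| ^ p ∂μ) = 0 := by
  rw [← one_smul ℝ (u₀, w₀)] at hmin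
  have hray := (hmin.comp_continuousOn (g := fun t : ℝ => t • (u₀, w₀)) (s := Set.Ioi 0)
    hK (continuous_id.smul continuous_const).continuousOn (Set.mem_Ioi.2 one_pos)).isLocalMin
    (Ioi_mem_nhds one_pos)
  exact hray.hasDerivAt_eq_zero (hasDerivAt_sparseObjective_smul_smul f ι α β γ p hf w₀)

end SparseObjective

theorem exists_stationary_multiplier {V W : Type*} [NormedAddCommGroup V] [InnerProductSpace ℝ V]
    [NormedAddCommGroup W] [InnerProductSpace ℝ W] (B : W →L[ℝ] V) {g μ₁ μ₂ u : V} {w : W}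
    {β γ c : ℝ} (hγ : γ ≠ 0) (hsub : μ₁ - μ₂ = g) (h₁ : inner ℝ μ₁ (B w - u) = 0)
    (h₂ : inner ℝ μ₂ (B w + u) = 0) (hscale : inner ℝ g u + β * ‖w‖ ^ 2 + γ * c = 0) :
    ∃ lam : W →L[ℝ] ℝ, (∀ v z, inner ℝ g v + β * inner ℝ w z + γ * lam z +
      inner ℝ μ₁ (B z - v) + inner ℝ μ₂ (B z + v) = 0) ∧ lam w = c := by
  set lam : W →L[ℝ] ℝ := -γ⁻¹ • ((innerSL ℝ (μ₁ + μ₂)).comp B + β • innerSL ℝ w)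
  have hlam : ∀ z, γ * lam z = -inner ℝ (μ₁ + μ₂) (B z) - β * inner ℝ w z := fun z => by
    rw [show lam z = -γ⁻¹ * (inner ℝ (μ₁ + μ₂) (B z) + β * inner ℝ w z) from rfl]
    field_simp
    ring
  refine ⟨lam, fun v z => ?_, mul_left_cancel₀ hγ ?_⟩
  · rw [hlam, ← hsub]
    simp only [inner_add_left, inner_sub_left, inner_sub_right, inner_add_right]
    ring
  · rw [inner_sub_right] at h₁
    rw [inner_add_right] at h₂
    rw [← hsub, inner_sub_left] at hscale
    rw [hlam, inner_add_left, real_inner_self_eq_norm_sq]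
    linear_combination -h₁ - h₂ - hscale

theorem necessary_optimality_condition_general {Ω W : Type*} [MeasurableSpace Ω]
    (μ : Measure Ω) [IsFiniteMeasure μ] (T : ℝ)
    [NormedAddCommGroup W] [InnerProductSpace ℝ W]
    (ι : W →L[ℝ] Lp ℝ 2 μ)
    (α β γ p : ℝ) (hγ : 0 < γ)
    (f : Lp ℝ 2 (timeSpaceMeasure μ T) → ℝ)
    (f' : Lp ℝ 2 (timeSpaceMeasure μ T) → (Lp ℝ 2 (timeSpaceMeasure μ T) →L[ℝ] ℝ))
    (hf' : ∀ u, HasFDerivAt f (f' u) u)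
    (E : Lp ℝ 2 μ → Lp ℝ 2 (timeSpaceMeasure μ T))
    (hE : ∀ z : Lp ℝ 2 μ, ⇑(E z) =ᵐ[timeSpaceMeasure μ T] fun q => z q.2)
    (ubar : Lp ℝ 2 (timeSpaceMeasure μ T)) (wbar : W)
    (hadm : ∀ᵐ q ∂(timeSpaceMeasure μ T), |ubar q| ≤ (ι wbar) q.2)
    (ρ : ℝ) (hρ : 0 < ρ)
    (hloc : ∀ (u : Lp ℝ 2 (timeSpaceMeasure μ T)) (w : W),
      (∀ᵐ q ∂(timeSpaceMeasure μ T), |u q| ≤ (ι w) q.2) →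
      ‖u - ubar‖ ≤ ρ → ‖w - wbar‖ ≤ ρ →
      f ubar + α / 2 * ‖ubar‖ ^ 2 + β / 2 * ‖wbar‖ ^ 2 +
          γ * ∫ x, |(ι wbar) x| ^ p ∂μ ≤
        f u + α / 2 * ‖u‖ ^ 2 + β / 2 * ‖w‖ ^ 2 + γ * ∫ x, |(ι w) x| ^ p ∂μ) :
    ∃ (lam : W →L[ℝ] ℝ) (mu1 mu2 : Lp ℝ 2 (timeSpaceMeasure μ T)),
      (∀ (v : Lp ℝ 2 (timeSpaceMeasure μ T)) (z : W),
        f' ubar v + α * (inner ℝ ubar v : ℝ) + β * (inner ℝ wbar z : ℝ) + γ * lam z +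
          (inner ℝ mu1 (E (ι z) - v) : ℝ) + (inner ℝ mu2 (E (ι z) + v) : ℝ) = 0) ∧
      lam wbar = p * ∫ x, |(ι wbar) x| ^ p ∂μ ∧
      (∀ᵐ q ∂(timeSpaceMeasure μ T), mu1 q ≤ 0) ∧
      (inner ℝ mu1 (E (ι wbar) - ubar) : ℝ) = 0 ∧
      (∀ᵐ q ∂(timeSpaceMeasure μ T), mu2 q ≤ 0) ∧
      (inner ℝ mu2 (E (ι wbar) + ubar) : ℝ) = 0 := by
  set K : Set (Lp ℝ 2 (timeSpaceMeasure μ T) × W) :=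
    {x | ∀ᵐ q ∂timeSpaceMeasure μ T, |x.1 q| ≤ ι x.2 q.2}
  have hmin : IsLocalMinOn (fun x => sparseObjective f ι α β γ p x.1 x.2) K (ubar, wbar) := by
    filter_upwards [self_mem_nhdsWithin, mem_nhdsWithin_of_mem_nhds
      (Metric.closedBall_mem_nhds (ubar, wbar) hρ)] with x hx hball
    rw [mem_closedBall_iff_norm, Prod.norm_def, max_le_iff] at hball
    exact hloc x.1 x.2 hx hball.1 hball.2
  have hcone : ∀ t : ℝ, 0 < t → t • (ubar, wbar) ∈ K := fun t ht => by
    change ∀ᵐ q ∂timeSpaceMeasure μ T, |(t • ubar) q| ≤ ι (t • wbar) q.2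
    rw [map_smul]
    exact Lp.ae_abs_smul_le_comp_snd hadm ht.le
  have hA : ∀ v : Lp ℝ 2 (timeSpaceMeasure μ T),
      (∀ᵐ q ∂timeSpaceMeasure μ T, |v q| ≤ E (ι wbar) q) ↔ (v, wbar) ∈ K :=
    fun v => eventually_congr ((hE _).mono fun q hq => by rw [hq])
  set g := (toDual ℝ (Lp ℝ 2 (timeSpaceMeasure μ T))).symm (f' ubar) + α • ubar
  have hg_apply : ∀ v, inner ℝ g v = f' ubar v + α * inner ℝ ubar v := fun v => by
    rw [inner_add_left, toDual_symm_apply, real_inner_smul_left]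
  have hvi : ∀ v, (∀ᵐ q ∂timeSpaceMeasure μ T, |v q| ≤ E (ι wbar) q) →
      0 ≤ inner ℝ g (v - ubar) := fun v hv =>
    inner_sub_nonneg_of_isLocalMinOn_sparseObjective f ι α β γ p hmin
      (Lp.convex_setOf_ae_abs_le fun q : ℝ × Ω => ι wbar q.2) hadm ((hA v).1 hv) (hf' ubar)
  have hscale : inner ℝ g ubar + β * ‖wbar‖ ^ 2 + γ * (p * ∫ x, |ι wbar x| ^ p ∂μ) = 0 := by
    rw [hg_apply, real_inner_self_eq_norm_sq]
    linarith [euler_identity_of_isLocalMinOn_sparseObjective f ι α β γ p hmin hcone (hf' ubar)]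
  obtain ⟨μ₁, μ₂, hsub, hμ₁, hcompl₁, hμ₂, hcompl₂⟩ :=
    Lp.exists_multipliers_of_forall_inner_sub_nonneg ((hA ubar).2 hadm) hvi
  obtain ⟨lam, hstat, hlam⟩ := exists_stationary_multiplier ((constExtensionCLM E hE).comp ι)
    hγ.ne' hsub hcompl₁ hcompl₂ hscale
  refine ⟨lam, μ₁, μ₂, fun v z => ?_, hlam, hμ₁, hcompl₁, hμ₂, hcompl₂⟩
  rw [← hg_apply]
  exact hstat v z

/-- First-order necessary optimality condition for the spatially sparse problem:
if `(ū,w̄)` is a local solution of minimizing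
`Φ(u,w) = f(u) + (α/2)‖u‖²_U + (β/2)‖w‖²_W + γ ∫_Ω |ι w|^p dμ` over
`K = {(u,w) : |u(t,x)| ≤ (ι w)(x) a.e.}`, then there exist `λ̄ ∈ W*` and
`μ̄¹, μ̄² ∈ U` such that for all `(v,z) ∈ U × W`
`f'(ū)v + α⟨ū,v⟩ + β⟨w̄,z⟩ + γλ̄(z) + ⟨μ̄¹, E(ιz) − v⟩ + ⟨μ̄², E(ιz) + v⟩ = 0`,
`λ̄(w̄) = p ∫ |ι w̄|^p dμ`, and the complementarity conditions hold. Here `E` denotes the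
constant-in-time extension operator and `W` enjoys the truncation property. -/
theorem necessary_optimality_condition {Ω W : Type*} [MeasurableSpace Ω]
    (μ : Measure Ω) [IsFiniteMeasure μ] (T : ℝ) (hT : 0 < T)
    [NormedAddCommGroup W] [InnerProductSpace ℝ W] [CompleteSpace W]
    (ι : W →L[ℝ] Lp ℝ 2 μ) (hι : IsCompactOperator ι)
    (htrunc : ∀ w : W, ∃ wp : W,
      (⇑(ι wp) =ᵐ[μ] fun x => max ((ι w) x) 0) ∧ (inner ℝ w wp : ℝ) ≤ ‖w‖ ^ 2)
    (α β γ p : ℝ) (hα : 0 < α) (hβ : 0 < β) (hγ : 0 < γ) (hp : p ∈ Set.Ioo (0 : ℝ) 1)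
    (f : Lp ℝ 2 (timeSpaceMeasure μ T) → ℝ)
    (hlsc : ∀ (v : ℕ → Lp ℝ 2 (timeSpaceMeasure μ T)) (v₀ : Lp ℝ 2 (timeSpaceMeasure μ T)),
      (∀ z : Lp ℝ 2 (timeSpaceMeasure μ T),
        Tendsto (fun k => (inner ℝ (v k) z : ℝ)) atTop (nhds (inner ℝ v₀ z))) →
      ((f v₀ : EReal) ≤ liminf (fun k => ((f (v k) : ℝ) : EReal)) atTop))
    (hbound : ∃ (g : Lp ℝ 2 (timeSpaceMeasure μ T) →L[ℝ] ℝ) (c : ℝ),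
      ∀ u : Lp ℝ 2 (timeSpaceMeasure μ T), g u + c ≤ f u)
    (f' : Lp ℝ 2 (timeSpaceMeasure μ T) → (Lp ℝ 2 (timeSpaceMeasure μ T) →L[ℝ] ℝ))
    (hf' : ∀ u, HasFDerivAt f (f' u) u) (hf'cont : Continuous f')
    (E : Lp ℝ 2 μ → Lp ℝ 2 (timeSpaceMeasure μ T))
    (hE : ∀ z : Lp ℝ 2 μ, ⇑(E z) =ᵐ[timeSpaceMeasure μ T] fun q => z q.2)
    (ubar : Lp ℝ 2 (timeSpaceMeasure μ T)) (wbar : W)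
    (hadm : ∀ᵐ q ∂(timeSpaceMeasure μ T), |ubar q| ≤ (ι wbar) q.2)
    (ρ : ℝ) (hρ : 0 < ρ)
    (hloc : ∀ (u : Lp ℝ 2 (timeSpaceMeasure μ T)) (w : W),
      (∀ᵐ q ∂(timeSpaceMeasure μ T), |u q| ≤ (ι w) q.2) →
      ‖u - ubar‖ ≤ ρ → ‖w - wbar‖ ≤ ρ →
      f ubar + α / 2 * ‖ubar‖ ^ 2 + β / 2 * ‖wbar‖ ^ 2 +
          γ * ∫ x, |(ι wbar) x| ^ p ∂μ ≤
        f u + α / 2 * ‖u‖ ^ 2 + β / 2 * ‖w‖ ^ 2 + γ * ∫ x, |(ι w) x| ^ p ∂μ) :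
    ∃ (lam : W →L[ℝ] ℝ) (mu1 mu2 : Lp ℝ 2 (timeSpaceMeasure μ T)),
      (∀ (v : Lp ℝ 2 (timeSpaceMeasure μ T)) (z : W),
        f' ubar v + α * (inner ℝ ubar v : ℝ) + β * (inner ℝ wbar z : ℝ) + γ * lam z +
          (inner ℝ mu1 (E (ι z) - v) : ℝ) + (inner ℝ mu2 (E (ι z) + v) : ℝ) = 0) ∧
      lam wbar = p * ∫ x, |(ι wbar) x| ^ p ∂μ ∧
      (∀ᵐ q ∂(timeSpaceMeasure μ T), mu1 q ≤ 0) ∧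
      (inner ℝ mu1 (E (ι wbar) - ubar) : ℝ) = 0 ∧
      (∀ᵐ q ∂(timeSpaceMeasure μ T), mu2 q ≤ 0) ∧
      (inner ℝ mu2 (E (ι wbar) + ubar) : ℝ) = 0 :=
  necessary_optimality_condition_general μ T ι α β γ p hγ f f' hf' E hE ubar wbar hadm ρ hρ hloc
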